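/- For every financial network without default costs (α = β = 1) and without cash injections, the strategy profile in which no bank removes any incoming edge is a pure Nash equilibrium of the edge-removal game. Concretely: for every bank j and every subset R of j's incoming edges, if P denotes the maximal clearing payments of the original network and P' the maximal clearing payments of the network in which l_{ij} is set to 0 for every (i,j) ∈ R, then a_j(P') ≤ a_j(P). Consequently, the Effect of Stability of edge-removal games without default costs and without cash injections is at most 1. -/

import Mathlib

/-
Without default costs a clearing payment matrix is determined by the asset vector `x`: bank `m`
pays `min (x m) (L m)`, split in proportion to its liabilities, and the maximal clearing assets
are the greatest fixed point of the resulting monotone asset map `Φ`. Let `a'` be the assets after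
bank `j` lowered some of its incoming liabilities. Cap every other bank's assets in the original
network at its value in `a'`: by Knaster–Tarski there is a vector `b ≤ a'` with `b j = a' j` and
`b i = min (a' i) (Φ b i)` for `i ≠ j`. Since a bank with a smaller liability base pays a larger
fraction of its debts, `Φ b i ≤ a' i` off `j`; money conservation then forces `a' j ≤ Φ b j`,
so `b` is a post-fixed point of `Φ` and lies below the maximal clearing assets.
-/

open Finset

/-- `p` is a proportional clearing payment matrix for the network with external assets `e`,
liabilities `l` and default costs `α, β`. -/
def IsClearing {ι : Type*} [Fintype ι] (α β : ℝ) (e : ι → ℝ) (l : ι → ι → ℝ)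
    (p : ι → ι → ℝ) : Prop :=
  (∀ i j, 0 ≤ p i j) ∧ (∀ i j, p i j ≤ l i j) ∧
  (∀ i, (∑ j, l i j) ≤ e i + (∑ j, p j i) → ∀ j, p i j = l i j) ∧
  (∀ i, e i + (∑ j, p j i) < (∑ j, l i j) →
    ∀ j, p i j = (α * e i + β * (∑ k, p k i)) * l i j / (∑ k, l i k))

/-- `p` is the maximal clearing payment matrix. -/
def IsMaxClearing {ι : Type*} [Fintype ι] (α β : ℝ) (e : ι → ℝ) (l p : ι → ι → ℝ) : Prop :=
  IsClearing α β e l p ∧ ∀ q, IsClearing α β e l q → ∀ i j, q i j ≤ p i j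

/-- Systemic liquidity: the sum of all payments. -/
def liquidity {ι : Type*} [Fintype ι] (p : ι → ι → ℝ) : ℝ := ∑ i, ∑ j, p i j

/-- Total assets of bank `i` under payments `p`: external assets plus incoming payments. -/
def assets {ι : Type*} [Fintype ι] (e : ι → ℝ) (p : ι → ι → ℝ) (i : ι) : ℝ :=
  e i + ∑ j, p j i

/-- The liabilities obtained from `l` when, in the edge-removal game, each bank `j`
removes the incoming edges from the banks in `s j`. -/
def removeEdges {ι : Type*} [DecidableEq ι] (l : ι → ι → ℝ) (s : ι → Finset ι) :
    ι → ι → ℝ :=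
  fun i j => if i ∈ s j then 0 else l i j

theorem MonotoneOn.exists_fixedPoint_mem_Icc {α : Type*} [ConditionallyCompleteLattice α]
    {f : α → α} {a b : α} (hab : a ≤ b) (hf : MonotoneOn f (Set.Icc a b))
    (ha : a ≤ f a) (hb : f b ≤ b) : ∃ x ∈ Set.Icc a b, f x = x := by
  have : Fact (a ≤ b) := ⟨hab⟩
  have maps_to : ∀ x ∈ Set.Icc a b, f x ∈ Set.Icc a b := fun x hx =>
    ⟨ha.trans (hf (Set.left_mem_Icc.2 hab) hx hx.1),
      (hf hx (Set.right_mem_Icc.2 hab) hx.2).trans hb⟩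
  let g : Set.Icc a b →o Set.Icc a b :=
    ⟨fun x => ⟨f x, maps_to x x.2⟩, fun x y hxy => hf x.2 y.2 hxy⟩
  exact ⟨g.lfp, g.lfp.2, congrArg Subtype.val g.map_lfp⟩

theorem min_div_le_min_div {a x y : ℝ} (ha : 0 ≤ a) (hx : 0 < x) (hxy : x ≤ y) :
    min a y / y ≤ min a x / x := by
  rcases le_total a x with hax | hxa
  · rw [min_eq_left hax, min_eq_left (hax.trans hxy)]
    exact div_le_div_of_nonneg_left ha hx hxy
  · rw [min_eq_right hxa, div_self hx.ne']
    exact div_le_one_of_le₀ (min_le_right a y) (hx.le.trans hxy)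

section ProportionalPayments

variable {ι : Type*} [Fintype ι] {e : ι → ℝ} {l : ι → ι → ℝ}

noncomputable def proportionalPayments (l : ι → ι → ℝ) (x : ι → ℝ) : ι → ι → ℝ :=
  fun m i => min (x m) (∑ k, l m k) * l m i / ∑ k, l m k

theorem proportionalPayments_nonneg (hl : 0 ≤ l) {x : ι → ℝ} {m : ι} (hx : 0 ≤ x m) (i : ι) :
    0 ≤ proportionalPayments l x m i :=
  div_nonneg (mul_nonneg (le_min hx (sum_nonneg fun k _ => hl m k)) (hl m i))
    (sum_nonneg fun k _ => hl m k)

theorem proportionalPayments_le (hl : 0 ≤ l) (x : ι → ℝ) (m i : ι) :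
    proportionalPayments l x m i ≤ l m i := by
  rcases (sum_nonneg fun k _ => hl m k : 0 ≤ ∑ k, l m k).eq_or_lt with hL | hL
  · simpa [proportionalPayments, ← hL] using hl m i
  · rw [proportionalPayments, div_le_iff₀ hL, mul_comm (l m i)]
    exact mul_le_mul_of_nonneg_right (min_le_right _ _) (hl m i)

theorem sum_proportionalPayments {x : ι → ℝ} {m : ι} (hx : 0 ≤ x m) :
    ∑ i, proportionalPayments l x m i = min (x m) (∑ k, l m k) := by
  rcases eq_or_ne (∑ k, l m k) 0 with hL | hL
  · simp [proportionalPayments, hL, hx]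
  · simp only [proportionalPayments, ← sum_div, ← mul_sum]
    exact mul_div_cancel_right₀ _ hL

theorem monotone_proportionalPayments (hl : 0 ≤ l) : Monotone (proportionalPayments l) :=
  fun x y hxy m i => by
    simp only [proportionalPayments, mul_div_assoc]
    exact mul_le_mul_of_nonneg_right (min_le_min_right _ (hxy m))
      (div_nonneg (hl m i) (sum_nonneg fun k _ => hl m k))

theorem assets_mono {p q : ι → ι → ℝ} (h : p ≤ q) : assets e p ≤ assets e q :=
  fun i => add_le_add le_rfl (sum_le_sum fun m _ => h m i)

theorem sum_assets (p : ι → ι → ℝ) : ∑ i, assets e p i = ∑ i, e i + ∑ m, ∑ i, p m i := by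
  simp only [assets, sum_add_distrib, sum_comm (γ := ι) (f := fun j i => p j i)]

theorem IsClearing.eq_proportionalPayments (hl : 0 ≤ l) {p : ι → ι → ℝ}
    (hp : IsClearing 1 1 e l p) : p = proportionalPayments l (assets e p) := by
  funext m i
  rcases le_or_gt (∑ k, l m k) (assets e p m) with hsolv | hdef
  · rw [hp.2.2.1 m hsolv i, proportionalPayments, min_eq_right hsolv]
    rcases eq_or_ne (∑ k, l m k) 0 with hL | hL
    · simp [hL, (sum_eq_zero_iff_of_nonneg fun k _ => hl m k).1 hL i (mem_univ i)]
    · exact (mul_div_cancel_left₀ _ hL).symm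
  · rw [hp.2.2.2 m hdef i, proportionalPayments, min_eq_left hdef.le, one_mul, one_mul]
    rfl

theorem isClearing_proportionalPayments (hl : 0 ≤ l) {x : ι → ℝ} (hx : 0 ≤ x)
    (hfix : assets e (proportionalPayments l x) = x) :
    IsClearing 1 1 e l (proportionalPayments l x) := by
  refine ⟨fun m i => proportionalPayments_nonneg hl (hx m) i,
    fun m i => proportionalPayments_le hl x m i, fun m hsolv i => ?_, fun m hdef i => ?_⟩
  · have hLx : ∑ k, l m k ≤ x m := hfix ▸ hsolv
    rcases eq_or_ne (∑ k, l m k) 0 with hL | hL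
    · have hli : l m i = 0 := (sum_eq_zero_iff_of_nonneg fun k _ => hl m k).1 hL i (mem_univ i)
      simp [proportionalPayments, hL, hli]
    · rw [proportionalPayments, min_eq_right hLx]
      exact mul_div_cancel_left₀ _ hL
  · have hxL : x m < ∑ k, l m k := hfix ▸ hdef
    rw [one_mul, one_mul]
    change _ = (assets e (proportionalPayments l x) m) * _ / _
    rw [hfix, proportionalPayments, min_eq_left hxL.le]

theorem IsMaxClearing.le_assets_of_le_assets_proportionalPayments (hl : 0 ≤ l) {P : ι → ι → ℝ}
    (hP : IsMaxClearing 1 1 e l P) {b : ι → ℝ} (hb : 0 ≤ b)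
    (hbΦ : b ≤ assets e (proportionalPayments l b)) : b ≤ assets e P := by
  have hΦ_le : ∀ x, assets e (proportionalPayments l x) ≤ assets e l := fun x =>
    assets_mono (proportionalPayments_le hl x)
  obtain ⟨x, ⟨hbx, -⟩, hfix⟩ := MonotoneOn.exists_fixedPoint_mem_Icc
    (f := fun x => assets e (proportionalPayments l x)) (hbΦ.trans (hΦ_le b))
    (fun x _ y _ hxy => assets_mono (monotone_proportionalPayments hl hxy)) hbΦ
    (hΦ_le _)
  calc b ≤ x := hbx
    _ = assets e (proportionalPayments l x) := hfix.symm
    _ ≤ assets e P := assets_mono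
      (hP.2 _ (isClearing_proportionalPayments hl (hb.trans hbx) hfix))

theorem le_assets_proportionalPayments (hl : 0 ≤ l) {x : ι → ℝ} (hx : 0 ≤ x) :
    e ≤ assets e (proportionalPayments l x) := fun i =>
  le_add_of_nonneg_right (sum_nonneg fun m _ => proportionalPayments_nonneg hl (hx m) i)

theorem sum_assets_proportionalPayments {x : ι → ℝ} (hx : 0 ≤ x) :
    ∑ i, assets e (proportionalPayments l x) i = ∑ i, e i + ∑ m, min (x m) (∑ k, l m k) := by
  rw [sum_assets]
  exact congrArg _ (sum_congr rfl fun m _ => sum_proportionalPayments (hx m))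

theorem proportionalPayments_le_proportionalPayments {l' : ι → ι → ℝ} (hl' : 0 ≤ l')
    (hl'l : l' ≤ l) {a b : ι → ℝ} {m i : ι} (ha : 0 ≤ a m) (hba : b m ≤ a m)
    (hmi : l' m i = l m i) :
    proportionalPayments l b m i ≤ proportionalPayments l' a m i := by
  rcases (hl' m i).eq_or_lt with hzero | hpos
  · simp [proportionalPayments, ← hmi, ← hzero]
  have hL'pos : 0 < ∑ k, l' m k := hpos.trans_le (single_le_sum (fun k _ => hl' m k) (mem_univ i))
  have hL'L : ∑ k, l' m k ≤ ∑ k, l m k := sum_le_sum fun k _ => hl'l m k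
  simp only [proportionalPayments, mul_div_right_comm _ (l' m i), ← hmi]
  refine mul_le_mul_of_nonneg_right ?_ (hl' m i)
  calc min (b m) (∑ k, l m k) / ∑ k, l m k ≤ min (a m) (∑ k, l m k) / ∑ k, l m k :=
        div_le_div_of_nonneg_right (min_le_min_right _ hba) (hL'pos.trans_le hL'L).le
    _ ≤ min (a m) (∑ k, l' m k) / ∑ k, l' m k := min_div_le_min_div ha hL'pos hL'L

theorem exists_capped_assets [DecidableEq ι] (hl : 0 ≤ l) (he : 0 ≤ e) {a : ι → ℝ}
    (hea : e ≤ a) (j : ι) :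
    ∃ b, e ≤ b ∧ b ≤ a ∧ b j = a j ∧
      ∀ i ≠ j, b i = min (a i) (assets e (proportionalPayments l b) i) := by
  let G : (ι → ℝ) → ι → ℝ := fun x i =>
    if i = j then a i else min (a i) (assets e (proportionalPayments l x) i)
  have hG : Monotone G := fun x y hxy i => by
    by_cases hi : i = j
    · simp only [G, if_pos hi, le_refl]
    · simp only [G, if_neg hi]
      exact min_le_min_left _ (assets_mono (monotone_proportionalPayments hl hxy) i)
  have heG : e ≤ G e := fun i => by
    by_cases hi : i = j
    · simp only [G, if_pos hi, hea i]
    · simp only [G, if_neg hi]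
      exact le_min (hea i) (le_assets_proportionalPayments hl he i)
  have hGa : G a ≤ a := fun i => by
    by_cases hi : i = j
    · simp only [G, if_pos hi, le_refl]
    · simp only [G, if_neg hi]
      exact min_le_left _ _
  obtain ⟨b, ⟨heb, hba⟩, hfix⟩ := MonotoneOn.exists_fixedPoint_mem_Icc hea (hG.monotoneOn _) heG hGa
  refine ⟨b, heb, hba, ?_, fun i hi => ?_⟩
  · simpa [G] using (congrFun hfix j).symm
  · simpa [G, hi] using (congrFun hfix i).symm

theorem IsMaxClearing.assets_le_of_incoming_reduced [DecidableEq ι] (he : 0 ≤ e)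
    {l' : ι → ι → ℝ} (hl' : 0 ≤ l') (hl'l : l' ≤ l) {j : ι}
    (hcol : ∀ m i, i ≠ j → l' m i = l m i) {P P' : ι → ι → ℝ}
    (hP : IsMaxClearing 1 1 e l P) (hP' : IsClearing 1 1 e l' P') :
    assets e P' j ≤ assets e P j := by
  have hl : 0 ≤ l := hl'.trans hl'l
  set a := assets e P'
  have hea : e ≤ a := fun i => le_add_of_nonneg_right (sum_nonneg fun m _ => hP'.1 m i)
  have ha : 0 ≤ a := he.trans hea
  have hP'eq : P' = proportionalPayments l' a := hP'.eq_proportionalPayments hl'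
  obtain ⟨b, heb, hba, hbj, hcap⟩ := exists_capped_assets hl he hea j
  have hb : 0 ≤ b := he.trans heb
  set Φb := assets e (proportionalPayments l b)
  have hoff : ∀ i ≠ j, b i = Φb i := fun i hi => by
    refine (hcap i hi).trans (min_eq_right (add_le_add le_rfl (sum_le_sum fun m _ => ?_)))
    rw [hP'eq]
    exact proportionalPayments_le_proportionalPayments hl' hl'l (ha m) (hba m) (hcol m i hi)
  -- money conservation: `Φb - b` has nonnegative total and vanishes off `j`
  have hbj_le : b j ≤ Φb j := by
    have hsum_a : ∑ i, a i = ∑ i, e i + ∑ m, min (a m) (∑ k, l' m k) := by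
      conv_lhs => rw [show a = assets e (proportionalPayments l' a) from congrArg (assets e) hP'eq]
      exact sum_assets_proportionalPayments ha
    have hloss : ∀ m, min (a m) (∑ k, l' m k) ≤ min (b m) (∑ k, l m k) + (a m - b m) :=
      fun m => by
        have := hba m
        have := sum_le_sum fun k (_ : k ∈ univ) => hl'l m k
        simp only [min_def]; split_ifs <;> linarith
    have hsum : ∑ i, (Φb i - b i) = Φb j - b j :=
      sum_eq_single j (fun i _ hi => by rw [hoff i hi, sub_self]) (by simp)
    have := sum_le_sum fun m (_ : m ∈ univ) => hloss m
    rw [sum_add_distrib, sum_sub_distrib] at this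
    rw [sum_sub_distrib, sum_assets_proportionalPayments hb] at hsum
    linarith
  have hbΦ : b ≤ Φb := fun i => by
    by_cases hi : i = j
    · exact hi ▸ hbj_le
    · exact (hoff i hi).le
  exact hbj ▸ hP.le_assets_of_le_assets_proportionalPayments hl hb hbΦ j

end ProportionalPayments

theorem no_removal_is_NE_no_default_costs_general
    (ι : Type*) [Fintype ι] [DecidableEq ι]
    (e : ι → ℝ) (he : ∀ i, 0 ≤ e i)
    (l : ι → ι → ℝ) (hl : ∀ i j, 0 ≤ l i j)
    (Pay : (ι → Finset ι) → ι → ι → ℝ)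
    (hPay : ∀ s, IsMaxClearing 1 1 e (removeEdges l s) (Pay s)) :
    -- no bank benefits from removing any subset of its incoming edges
    (∀ (j : ι) (R : Finset ι) (P P' : ι → ι → ℝ),
      IsMaxClearing 1 1 e l P →
      IsMaxClearing 1 1 e (fun a b => if b = j ∧ a ∈ R then 0 else l a b) P' →
      assets e P' j ≤ assets e P j)
    -- hence the no-removal profile is a pure Nash equilibrium
    ∧ (∀ (j : ι) (R : Finset ι),
        assets e (Pay (Function.update (fun _ => (∅ : Finset ι)) j R)) j
          ≤ assets e (Pay (fun _ => (∅ : Finset ι))) j)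
    -- whose liquidity equals that of the original network: Effect of Stability ≤ 1
    ∧ (∀ P, IsMaxClearing 1 1 e l P →
        liquidity P ≤ liquidity (Pay (fun _ => (∅ : Finset ι)))) := by
  have hnone : removeEdges l (fun _ => ∅) = l := by
    funext a b
    simp [removeEdges]
  have hupdate : ∀ (j : ι) (R : Finset ι),
      removeEdges l (Function.update (fun _ => ∅) j R) =
        fun a b => if b = j ∧ a ∈ R then 0 else l a b := fun j R => by
    funext a b
    by_cases hb : b = j <;> simp [removeEdges, hb]
  have hP₀ : IsMaxClearing 1 1 e l (Pay fun _ => ∅) := hnone ▸ hPay _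
  have hremove : ∀ (j : ι) (R : Finset ι) (P P' : ι → ι → ℝ),
      IsMaxClearing 1 1 e l P →
      IsMaxClearing 1 1 e (fun a b => if b = j ∧ a ∈ R then 0 else l a b) P' →
      assets e P' j ≤ assets e P j := fun j R P P' hP hP' =>
    hP.assets_le_of_incoming_reduced he (fun a b => by split_ifs <;> simp [hl a b])
      (fun a b => by split_ifs <;> simp [hl a b]) (fun a b hb => by simp [hb]) hP'.1
  exact ⟨hremove, fun j R => hremove j R _ _ hP₀ (hupdate j R ▸ hPay _), fun P hP =>
    sum_le_sum fun i _ => sum_le_sum fun k _ => hP₀.2 P hP.1 i k⟩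

/-- Without default costs (`α = β = 1`) and without cash injections, the profile in which
no bank removes any incoming edge is a pure Nash equilibrium of the edge-removal game.
Concretely (first conjunct): for every bank `j` and every subset `R` of its incoming
edges, if `P` are the maximal clearing payments of the original network and `P'` those of
the network in which `l i j` is set to `0` for every `i ∈ R`, then
`a_j(P') ≤ a_j(P)`.  The second and third conjuncts express the consequence that the
Effect of Stability is at most 1: the no-removal profile is an equilibrium whose
liquidity is at least the liquidity of the original network. -/
theorem no_removal_is_NE_no_default_costs
    (ι : Type*) [Fintype ι] [DecidableEq ι]
    (e : ι → ℝ) (he : ∀ i, 0 ≤ e i)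
    (l : ι → ι → ℝ) (hl : ∀ i j, 0 ≤ l i j) (hdiag : ∀ i, l i i = 0)
    (Pay : (ι → Finset ι) → ι → ι → ℝ)
    (hPay : ∀ s, IsMaxClearing 1 1 e (removeEdges l s) (Pay s)) :
    -- no bank benefits from removing any subset of its incoming edges
    (∀ (j : ι) (R : Finset ι) (P P' : ι → ι → ℝ),
      IsMaxClearing 1 1 e l P →
      IsMaxClearing 1 1 e (fun a b => if b = j ∧ a ∈ R then 0 else l a b) P' →
      assets e P' j ≤ assets e P j)
    -- hence the no-removal profile is a pure Nash equilibrium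
    ∧ (∀ (j : ι) (R : Finset ι),
        assets e (Pay (Function.update (fun _ => (∅ : Finset ι)) j R)) j
          ≤ assets e (Pay (fun _ => (∅ : Finset ι))) j)
    -- whose liquidity equals that of the original network: Effect of Stability ≤ 1
    ∧ (∀ P, IsMaxClearing 1 1 e l P →
        liquidity P ≤ liquidity (Pay (fun _ => (∅ : Finset ι)))) :=
  no_removal_is_NE_no_default_costs_general ι e he l hl Pay hPay
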